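/- The invariant pseudo-Hermitian metric on 𝔪 = 𝔤/𝔥 is unique up to scale: every symmetric bilinear form B' on 𝔪 satisfying B'(Ju, Jv) = B'(u, v) for all u, v ∈ 𝔪 and B'(ρ(X)u, v) + B'(u, ρ(X)v) = 0 for all X ∈ 𝔥 and u, v ∈ 𝔪 is a real scalar multiple of the form B with B(z̄, ē) = B(x̄₂, x̄₄) = 1/2, B(b̄, b̄) = B(x̄₃, x̄₃) = −1 and B = 0 on all other pairs of basis vectors. -/

import Mathlib

noncomputable section

/-- The underlying space of the 9-dimensional Lie algebra `𝔤`; coordinates are taken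
with respect to the ordered basis `z, b, x₁, x₂, x₃, x₄, h, e, f`
(so index 0 = z, 1 = b, 2 = x₁, 3 = x₂, 4 = x₃, 5 = x₄, 6 = h, 7 = e, 8 = f). -/
def G : Type := Fin 9 → ℝ

instance : AddCommGroup G := inferInstanceAs (AddCommGroup (Fin 9 → ℝ))
instance : Module ℝ G := inferInstanceAs (Module ℝ (Fin 9 → ℝ))

@[simp] lemma G.add_apply (u v : G) (k : Fin 9) : (u + v) k = u k + v k := rfl
@[simp] lemma G.smul_apply (c : ℝ) (u : G) (k : Fin 9) : (c • u) k = c * u k := rfl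
@[simp] lemma G.zero_apply (k : Fin 9) : (0 : G) k = 0 := rfl

/-- The Lie bracket of `𝔤` determined by `[b,xᵢ] = xᵢ`, `[b,z] = 2z`, `[h,x₁] = −3x₁`,
`[h,x₂] = −x₂`, `[h,x₃] = x₃`, `[h,x₄] = 3x₄`, `[f,x₂] = −3x₁`, `[f,x₃] = −2x₂`,
`[f,x₄] = −x₃`, `[e,x₁] = x₂`, `[e,x₂] = 2x₃`, `[e,x₃] = 3x₄`, `[x₁,x₄] = z`,
`[x₂,x₃] = −3z`, `[h,f] = −2f`, `[h,e] = 2e`, `[f,e] = h`, all other brackets of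
basis elements being zero. -/
def gb (u v : G) : G := fun k =>
  match k with
  | 0 => -2*(u 0*v 1 - u 1*v 0) + (u 2*v 5 - u 5*v 2) - 3*(u 3*v 4 - u 4*v 3)
  | 1 => 0
  | 2 => (u 1*v 2 - u 2*v 1) + 3*(u 2*v 6 - u 6*v 2) + 3*(u 3*v 8 - u 8*v 3)
  | 3 => (u 1*v 3 - u 3*v 1) - (u 2*v 7 - u 7*v 2) + (u 3*v 6 - u 6*v 3) + 2*(u 4*v 8 - u 8*v 4)
  | 4 => (u 1*v 4 - u 4*v 1) - 2*(u 3*v 7 - u 7*v 3) - (u 4*v 6 - u 6*v 4) + (u 5*v 8 - u 8*v 5)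
  | 5 => (u 1*v 5 - u 5*v 1) - 3*(u 4*v 7 - u 7*v 4) - 3*(u 5*v 6 - u 6*v 5)
  | 6 => -(u 7*v 8 - u 8*v 7)
  | 7 => 2*(u 6*v 7 - u 7*v 6)
  | 8 => -2*(u 6*v 8 - u 8*v 6)

instance : LieRing G where
  bracket := gb
  add_lie := by intro x y z; funext k; fin_cases k <;> simp only [gb, G.add_apply] <;> ring
  lie_add := by intro x y z; funext k; fin_cases k <;> simp only [gb, G.add_apply] <;> ring
  lie_self := by intro x; funext k; fin_cases k <;> simp only [gb, G.zero_apply] <;> ring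
  leibniz_lie := by intro x y z; funext k; fin_cases k <;> simp only [gb, G.add_apply] <;> ring

lemma G.lie_def (u v : G) : ⁅u, v⁆ = gb u v := rfl

instance : LieAlgebra ℝ G where
  lie_smul := by
    intro c x y; funext k
    rw [G.lie_def, G.lie_def]
    fin_cases k <;> simp only [gb, G.smul_apply] <;> ring

/-- basis vector `z` -/ def zv : G := Pi.single 0 1
/-- basis vector `b` -/ def bv : G := Pi.single 1 1
/-- basis vector `x₁` -/ def x1v : G := Pi.single 2 1
/-- basis vector `x₂` -/ def x2v : G := Pi.single 3 1
/-- basis vector `x₃` -/ def x3v : G := Pi.single 4 1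
/-- basis vector `x₄` -/ def x4v : G := Pi.single 5 1
/-- basis vector `h` -/ def hv : G := Pi.single 6 1
/-- basis vector `e` -/ def ev : G := Pi.single 7 1
/-- basis vector `f` -/ def fv : G := Pi.single 8 1


/-- The subalgebra `𝔥 = span{x₁, h − b, f − z}` (as a subspace of `𝔤`). -/
def Hsub : Submodule ℝ G := Submodule.span ℝ {x1v, hv - bv, fv - zv}

/-- The quotient map `π : 𝔤 → 𝔪 = 𝔤/𝔥`. -/
def pr : G →ₗ[ℝ] G ⧸ Hsub := Hsub.mkQ

/-- The defining values of the invariant almost complex structure `J` on `𝔪 = 𝔤/𝔥`: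
`J z̄ = x̄₂`, `J b̄ = −x̄₃`, `J ē = x̄₄`, `J x̄₂ = −z̄`, `J x̄₃ = b̄`, `J x̄₄ = −ē`. -/
def IsJ (J : Module.End ℝ (G ⧸ Hsub)) : Prop :=
  J (pr zv) = pr x2v ∧ J (pr bv) = -pr x3v ∧ J (pr ev) = pr x4v ∧
  J (pr x2v) = -pr zv ∧ J (pr x3v) = pr bv ∧ J (pr x4v) = -pr ev

/-- The ordered basis `z̄, b̄, ē, x̄₂, x̄₃, x̄₄` of `𝔪 = 𝔤/𝔥`. -/
def mbas : Fin 6 → G ⧸ Hsub := ![pr zv, pr bv, pr ev, pr x2v, pr x3v, pr x4v]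

/-- The Gram matrix of the invariant pseudo-Hermitian metric `B` in the basis
`z̄, b̄, ē, x̄₂, x̄₃, x̄₄`: `B(z̄,ē) = 1/2`, `B(x̄₂,x̄₄) = 1/2`, `B(b̄,b̄) = −1`,
`B(x̄₃,x̄₃) = −1`, and `B = 0` on all other pairs of basis vectors. -/
def Bmat : Matrix (Fin 6) (Fin 6) ℝ :=
  !![0,    0, 1/2,   0,  0,   0;
     0,   -1,   0,   0,  0,   0;
     1/2,  0,   0,   0,  0,   0;
     0,    0,   0,   0,  0, 1/2;
     0,    0,   0,   0, -1,   0;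
     0,    0,   0, 1/2,  0,   0]

/-- The defining values of the bilinear form `B` on `𝔪`. -/
def IsB (B : LinearMap.BilinForm ℝ (G ⧸ Hsub)) : Prop :=
  ∀ i j : Fin 6, B (mbas i) (mbas j) = Bmat i j

/-! The element `h - b ∈ 𝔥` acts on `𝔪` diagonally, with weights `-2, 0, 2, -2, 0, 2` on
`z̄, b̄, ē, x̄₂, x̄₃, x̄₄`, so an invariant form pairs only vectors of opposite weights. Invariance
under `x₁` then kills `B'(ē, x̄₂)` and `B'(z̄, x̄₄)`, invariance under `f - z` gives
`B'(b̄, b̄) = -2 B'(z̄, ē)`, and `J`-invariance carries `B'(z̄, ē)` and `B'(b̄, b̄)` over to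
`B'(x̄₂, x̄₄)` and `B'(x̄₃, x̄₃)` and kills `B'(b̄, x̄₃)`. Hence `B' = 2 B'(z̄, ē) • B`. -/

@[simp] lemma G.sub_apply (u v : G) (k : Fin 9) : (u - v) k = u k - v k := rfl
@[simp] lemma G.neg_apply (u : G) (k : Fin 9) : (-u) k = -(u k) := rfl

theorem LinearMap.BilinForm.apply_eq_zero_of_smul_add_smul {R M : Type*} [CommSemiring R]
    [NoZeroDivisors R] [AddCommMonoid M] [Module R M] (B : LinearMap.BilinForm R M) {u v : M}
    {a b : R} (hab : a + b ≠ 0) (h : B (a • u) v + B u (b • v) = 0) : B u v = 0 := by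
  rw [map_smul, LinearMap.smul_apply, map_smul, smul_eq_mul, smul_eq_mul, ← add_mul] at h
  exact (mul_eq_zero.1 h).resolve_left hab

def mlift : Fin 6 → G := ![zv, bv, ev, x2v, x3v, x4v]

lemma pr_mlift (i : Fin 6) : pr (mlift i) = mbas i := by
  fin_cases i <;> rfl

def weight : Fin 6 → ℝ := ![-2, 0, 2, -2, 0, 2]

lemma lie_h_sub_b_mlift (i : Fin 6) : ⁅hv - bv, mlift i⁆ = weight i • mlift i := by
  fin_cases i <;> funext k <;> rw [G.lie_def] <;> fin_cases k <;>
    simp only [gb, G.sub_apply, G.smul_apply] <;>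
    simp [mlift, weight, zv, bv, ev, x2v, x3v, x4v, hv] <;> norm_num

lemma lie_x1_ev : ⁅x1v, ev⁆ = -x2v := by
  funext k; rw [G.lie_def]; fin_cases k <;> simp only [gb, G.neg_apply] <;> simp [x1v, ev, x2v]

lemma lie_x1_x4v : ⁅x1v, x4v⁆ = zv := by
  funext k; rw [G.lie_def]; fin_cases k <;> simp [gb, x1v, x4v, zv]

lemma lie_f_sub_z_bv : ⁅fv - zv, bv⁆ = (2 : ℝ) • zv := by
  funext k; rw [G.lie_def]
  fin_cases k <;> simp only [gb, G.sub_apply, G.smul_apply] <;> simp [fv, zv, bv]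

lemma lie_f_sub_z_ev : ⁅fv - zv, ev⁆ = hv := by
  funext k; rw [G.lie_def]; fin_cases k <;> simp only [gb, G.sub_apply] <;> simp [fv, zv, ev, hv]

lemma x1v_mem : x1v ∈ Hsub := Submodule.subset_span (by simp)
lemma h_sub_b_mem : hv - bv ∈ Hsub := Submodule.subset_span (by simp)
lemma f_sub_z_mem : fv - zv ∈ Hsub := Submodule.subset_span (by simp)

lemma pr_x1v : pr x1v = 0 := (Submodule.Quotient.mk_eq_zero _).2 x1v_mem
lemma pr_hv : pr hv = pr bv := (Submodule.Quotient.eq _).2 h_sub_b_mem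
lemma pr_fv : pr fv = pr zv := (Submodule.Quotient.eq _).2 f_sub_z_mem

lemma span_range_mbas : Submodule.span ℝ (Set.range mbas) = ⊤ := by
  let std : Module.Basis (Fin 9) ℝ G := Pi.basisFun ℝ (Fin 9)
  have hstd : ∀ k, std k = Pi.single k 1 := Pi.basisFun_apply ℝ (Fin 9)
  rw [eq_top_iff, ← LinearMap.range_eq_top.2 (Submodule.mkQ_surjective Hsub),
    LinearMap.range_eq_map, ← std.span_eq, Submodule.map_span, Submodule.span_le,
    ← Set.range_comp, Set.range_subset_iff]
  intro k
  rw [Function.comp_apply, hstd]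
  fin_cases k
  · exact Submodule.subset_span ⟨0, rfl⟩
  · exact Submodule.subset_span ⟨1, rfl⟩
  · change pr x1v ∈ _
    rw [pr_x1v]
    exact Submodule.zero_mem _
  · exact Submodule.subset_span ⟨3, rfl⟩
  · exact Submodule.subset_span ⟨4, rfl⟩
  · exact Submodule.subset_span ⟨5, rfl⟩
  · change pr hv ∈ _
    exact pr_hv ▸ Submodule.subset_span ⟨1, rfl⟩
  · exact Submodule.subset_span ⟨2, rfl⟩
  · change pr fv ∈ _
    exact pr_fv ▸ Submodule.subset_span ⟨0, rfl⟩

lemma Bmat_eq_zero_of_weight_add_ne_zero {i j : Fin 6} (h : weight i + weight j ≠ 0) :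
    Bmat i j = 0 := by
  revert h
  fin_cases i <;> fin_cases j <;> norm_num [weight, Bmat]

section Invariant

variable {B' : LinearMap.BilinForm ℝ (G ⧸ Hsub)}
  (hinv : ∀ X ∈ Hsub, ∀ u v : G, B' (pr ⁅X, u⁆) (pr v) + B' (pr u) (pr ⁅X, v⁆) = 0)
include hinv

lemma apply_mbas_eq_zero_of_weight_add_ne_zero {i j : Fin 6} (h : weight i + weight j ≠ 0) :
    B' (mbas i) (mbas j) = 0 := by
  refine B'.apply_eq_zero_of_smul_add_smul h ?_
  simpa only [lie_h_sub_b_mlift, map_smul, pr_mlift] using hinv _ h_sub_b_mem (mlift i) (mlift j)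

lemma apply_bv_bv_eq_of_invariant : B' (pr bv) (pr bv) = -(2 * B' (pr zv) (pr ev)) := by
  have h := hinv _ f_sub_z_mem bv ev
  rw [lie_f_sub_z_bv, lie_f_sub_z_ev, pr_hv, map_smul, map_smul, LinearMap.smul_apply,
    smul_eq_mul] at h
  linarith

variable (hsymm : ∀ u v : G ⧸ Hsub, B' u v = B' v u)
include hsymm

lemma apply_ev_x2v_eq_zero : B' (pr ev) (pr x2v) = 0 := by
  have h := hinv _ x1v_mem ev ev
  simp only [lie_x1_ev, map_neg, LinearMap.neg_apply, hsymm (pr x2v)] at h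
  linarith

lemma apply_zv_x4v_eq_zero : B' (pr zv) (pr x4v) = 0 := by
  have h := hinv _ x1v_mem x4v x4v
  rw [lie_x1_x4v, hsymm (pr x4v)] at h
  linarith

end Invariant

section Hermitian

variable {J : Module.End ℝ (G ⧸ Hsub)} (hJ : IsJ J) {B' : LinearMap.BilinForm ℝ (G ⧸ Hsub)}
  (hherm : ∀ u v : G ⧸ Hsub, B' (J u) (J v) = B' u v)
include hJ hherm

lemma apply_x2v_x4v_eq : B' (pr x2v) (pr x4v) = B' (pr zv) (pr ev) := by
  rw [← hJ.1, ← hJ.2.2.1, hherm]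

lemma apply_x3v_x3v_eq : B' (pr x3v) (pr x3v) = B' (pr bv) (pr bv) := by
  rw [← hherm, hJ.2.2.2.2.1]

lemma apply_bv_x3v_eq_zero (hsymm : ∀ u v : G ⧸ Hsub, B' u v = B' v u) :
    B' (pr bv) (pr x3v) = 0 := by
  have h := hherm (pr bv) (pr x3v)
  rw [hJ.2.1, hJ.2.2.2.2.1, map_neg, LinearMap.neg_apply, hsymm (pr x3v)] at h
  linarith

end Hermitian

lemma Bmat_comm (i j : Fin 6) : Bmat i j = Bmat j i := by
  fin_cases i <;> fin_cases j <;> rfl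

lemma apply_mbas_eq_mul_Bmat {J : Module.End ℝ (G ⧸ Hsub)} (hJ : IsJ J)
    {B' : LinearMap.BilinForm ℝ (G ⧸ Hsub)} (hsymm : ∀ u v : G ⧸ Hsub, B' u v = B' v u)
    (hherm : ∀ u v : G ⧸ Hsub, B' (J u) (J v) = B' u v)
    (hinv : ∀ X ∈ Hsub, ∀ u v : G, B' (pr ⁅X, u⁆) (pr v) + B' (pr u) (pr ⁅X, v⁆) = 0)
    (i j : Fin 6) : B' (mbas i) (mbas j) = 2 * B' (pr zv) (pr ev) * Bmat i j := by
  wlog hij : i ≤ j generalizing i j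
  · rw [hsymm, this j i (le_of_not_ge hij), Bmat_comm]
  by_cases hw : weight i + weight j = 0
  · have hbb := apply_bv_bv_eq_of_invariant hinv
    have hx3x3 := apply_x3v_x3v_eq hJ hherm
    have hx2x4 := apply_x2v_x4v_eq hJ hherm
    have hbx3 := apply_bv_x3v_eq_zero hJ hherm hsymm
    have hex2 := apply_ev_x2v_eq_zero hinv hsymm
    have hzx4 := apply_zv_x4v_eq_zero hinv hsymm
    revert hw hij
    fin_cases i <;> fin_cases j <;> norm_num [weight, mbas, Bmat, Fin.le_def] <;> linarith
  · rw [apply_mbas_eq_zero_of_weight_add_ne_zero hinv hw, Bmat_eq_zero_of_weight_add_ne_zero hw,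
      mul_zero]

/-- The invariant pseudo-Hermitian metric on `𝔪 = 𝔤/𝔥` is unique up to
scale: every symmetric bilinear form `B'` on `𝔪` satisfying `B'(Ju,Jv) = B'(u,v)` and
`B'(ρ(X)u, v) + B'(u, ρ(X)v) = 0` for all `X ∈ 𝔥` is a real scalar multiple of the
form `B` with `B(z̄,ē) = B(x̄₂,x̄₄) = 1/2`, `B(b̄,b̄) = B(x̄₃,x̄₃) = −1` and `B = 0` on all
other pairs of basis vectors. -/
theorem stmt11 (J : Module.End ℝ (G ⧸ Hsub)) (hJ : IsJ J)
    (B : LinearMap.BilinForm ℝ (G ⧸ Hsub)) (hB : IsB B)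
    (B' : LinearMap.BilinForm ℝ (G ⧸ Hsub))
    (hB'symm : ∀ u v : G ⧸ Hsub, B' u v = B' v u)
    (hB'herm : ∀ u v : G ⧸ Hsub, B' (J u) (J v) = B' u v)
    (hB'inv : ∀ X ∈ Hsub, ∀ u v : G, B' (pr ⁅X, u⁆) (pr v) + B' (pr u) (pr ⁅X, v⁆) = 0) :
    ∃ c : ℝ, B' = c • B := by
  refine ⟨2 * B' (pr zv) (pr ev), LinearMap.ext_on_range span_range_mbas fun i =>
    LinearMap.ext_on_range span_range_mbas fun j => ?_⟩
  rw [LinearMap.smul_apply, LinearMap.smul_apply, hB i j, smul_eq_mul]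
  exact apply_mbas_eq_mul_Bmat hJ hB'symm hB'herm hB'inv i j
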